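/- Let X_1,...,X_n be n real-valued (possibly dependent) random variables with order statistics X_{1:n} ≤ ... ≤ X_{n:n}, and suppose Assumption A holds: the distribution function of X_{n:n} has infinite upper endpoint and belongs to GMDA(h) for some positive scaling function h, condition (DS1) holds for this h for every t > 0, and condition (DS2) holds for this h for some L > 0. Then for any 0 < a ≤ b < ∞ and 0 ≤ d < ∞, the relation P(∑_{i=0}^{n-1} c_i X_{n-i:n} > x) ~ P(c_0 X_{n:n} > x) ~ ∑_{i=1}^{n} P(c_0 X_i > x) as x → ∞ holds uniformly for (c_0, c_1, ..., c_{n-1}) ∈ [a,b] × [0,d]^{n-1}; that is, the ratios of the three quantities converge to 1 uniformly over this compact set of weight vectors. -/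

import Mathlib

open MeasureTheory Filter Topology Asymptotics

noncomputable section

/-- Tail probability `P(Y > x)` of a real random variable. -/
def tailP {Ω : Type*} [MeasurableSpace Ω] (μ : Measure Ω) (Y : Ω → ℝ) (x : ℝ) : ℝ :=
  (μ {ω | x < Y ω}).toReal

/-- The maximum `X_{n:n}` of finitely many random variables. -/
def maxRV {Ω : Type*} {n : ℕ} (X : Fin n → Ω → ℝ) (ω : Ω) : ℝ := ⨆ i, X i ω

/-- The `i`-th largest value (descending order statistic, `0`-indexed):
`ordDesc X i = X_{n-i:n}`. -/
def ordDesc {Ω : Type*} {n : ℕ} (X : Fin n → Ω → ℝ) (i : Fin n) (ω : Ω) : ℝ :=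
  (((List.ofFn fun j => X j ω).mergeSort fun a b => decide (b ≤ a)).getD i 0)

/-- A tail function `T = 1 - F` is long-tailed (`F ∈ 𝓛`). -/
def LongTailedT (T : ℝ → ℝ) : Prop :=
  (∀ x : ℝ, 0 ≤ x → 0 < T x) ∧
  ∀ y : ℝ, Tendsto (fun x => T (x + y) / T x) atTop (𝓝 1)

/-- A function is dominatedly varying. -/
def DomVarFun (h : ℝ → ℝ) : Prop :=
  ∀ y : ℝ, 0 < y →
    (0 : EReal) < atTop.liminf (fun x => ((h (x * y) / h x : ℝ) : EReal)) ∧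
    atTop.limsup (fun x => ((h (x * y) / h x : ℝ) : EReal)) < ⊤

/-- A function is weakly self-neglecting. -/
def WeaklySelfNeg (h : ℝ → ℝ) : Prop :=
  ∀ y : ℝ, atTop.limsup (fun x => ((h (x + y * h x) / h x : ℝ) : EReal)) < ⊤

/-- `h ∈ 𝓗_F` where `T = 1 - F` is the tail of `F`. -/
def MemScaleClass (T h : ℝ → ℝ) : Prop :=
  (∀ᶠ x in atTop, 0 < h x) ∧
  (h =o[atTop] fun x : ℝ => x) ∧
  (∀ y : ℝ, Tendsto (fun x => T (x + y * h x) / T x) atTop (𝓝 1)) ∧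
  WeaklySelfNeg h

/-- Upper endpoint `x_F = sup {x : F(x) < 1}` of a distribution with tail `T = 1 - F`. -/
def upEnd (T : ℝ → ℝ) : EReal := sSup ((fun x : ℝ => (x : EReal)) '' {x | 0 < T x})

open Classical in
/-- The filter of "`x → x_F`". -/
def endFilter (T : ℝ → ℝ) : Filter ℝ :=
  if upEnd T = ⊤ then atTop else 𝓝[<] (upEnd T).toReal

/-- `F ∈ GMDA(h)` for `T = 1 - F`. -/
def MemGMDA (T h : ℝ → ℝ) : Prop :=
  (∀ x, 0 < h x) ∧
  ∀ y : ℝ, Tendsto (fun x => T (x + y * h x) / T x) (endFilter T) (𝓝 (Real.exp (-y)))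

/-- Condition (DS1) (for all `t > 0`). -/
def DS1 {Ω : Type*} [MeasurableSpace Ω] (μ : Measure Ω) {n : ℕ} (X : Fin n → Ω → ℝ)
    (h : ℝ → ℝ) : Prop :=
  ∀ t : ℝ, 0 < t → ∀ i j : Fin n, i ≠ j →
    Tendsto (fun x => (μ {ω | t * h x < |X i ω| ∧ x < X j ω}).toReal / tailP μ (maxRV X) x)
      atTop (𝓝 0)

/-- Condition (DS2) for a given `L > 0`. -/
def DS2 {Ω : Type*} [MeasurableSpace Ω] (μ : Measure Ω) {n : ℕ} (X : Fin n → Ω → ℝ)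
    (h : ℝ → ℝ) (L : ℝ) : Prop :=
  ∀ i j : Fin n, i < j →
    Tendsto (fun x => (μ {ω | L * h x < X i ω ∧ L * h x < X j ω}).toReal / tailP μ (maxRV X) x)
      atTop (𝓝 0)

/-- Condition (v1). -/
def CondV1 {Ω : Type*} [MeasurableSpace Ω] (μ : Measure Ω) {n : ℕ} (X : Fin n → Ω → ℝ) : Prop :=
  ∀ i j : Fin n, i < j →
    Tendsto (fun x => (μ {ω | x < X i ω ∧ x < X j ω}).toReal / tailP μ (maxRV X) x)
      atTop (𝓝 0)

/-- Assumption A: `X_{n:n}` has an infinite upper endpoint, `X_{n:n} ∈ GMDA(h)`,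
(DS1) holds for all `t > 0` and (DS2) for some `L > 0`. -/
def AssumptionA {Ω : Type*} [MeasurableSpace Ω] (μ : Measure Ω) {n : ℕ}
    (X : Fin n → Ω → ℝ) : Prop :=
  ∃ h : ℝ → ℝ,
    (∀ x : ℝ, 0 < tailP μ (maxRV X) x) ∧
    MemGMDA (tailP μ (maxRV X)) h ∧
    DS1 μ X h ∧ ∃ L : ℝ, 0 < L ∧ DS2 μ X h L

/-- Assumption B: `X_{n:n} ∈ 𝓛` and some `h ∈ 𝓗_{X_{n:n}}` satisfies (DS1) for all `t > 0`
and (DS2) for some `L > 0`. -/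
def AssumptionB {Ω : Type*} [MeasurableSpace Ω] (μ : Measure Ω) {n : ℕ}
    (X : Fin n → Ω → ℝ) : Prop :=
  LongTailedT (tailP μ (maxRV X)) ∧
  ∃ h : ℝ → ℝ, MemScaleClass (tailP μ (maxRV X)) h ∧
    DS1 μ X h ∧ ∃ L : ℝ, 0 < L ∧ DS2 μ X h L

/-- Assumption C: `X_{n:n} ∈ 𝓛 ∩ 𝓓` and some dominatedly varying `h ∈ 𝓗_{X_{n:n}}`
satisfies (DS1) for all `t > 0`. -/
def AssumptionC {Ω : Type*} [MeasurableSpace Ω] (μ : Measure Ω) {n : ℕ}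
    (X : Fin n → Ω → ℝ) : Prop :=
  LongTailedT (tailP μ (maxRV X)) ∧ DomVarFun (tailP μ (maxRV X)) ∧
  ∃ h : ℝ → ℝ, DomVarFun h ∧ MemScaleClass (tailP μ (maxRV X)) h ∧ DS1 μ X h

/-- The uniform (in the weights `c ∈ K`) max-sum asymptotic equivalence (max-sum0):
`P(∑ c_i X_{n-i:n} > x) ~ P(c_0 X_{n:n} > x) ~ ∑ P(c_0 X_i > x)` uniformly on `K`. -/
def UnifMaxSum {Ω : Type*} [MeasurableSpace Ω] (μ : Measure Ω) {n : ℕ} [NeZero n]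
    (X : Fin n → Ω → ℝ) (K : Set (Fin n → ℝ)) : Prop :=
  TendstoUniformlyOn
    (fun x (c : Fin n → ℝ) =>
      tailP μ (fun ω => ∑ i, c i * ordDesc X i ω) x /
        tailP μ (fun ω => c 0 * maxRV X ω) x) 1 atTop K ∧
  TendstoUniformlyOn
    (fun x (c : Fin n → ℝ) =>
      tailP μ (fun ω => c 0 * maxRV X ω) x /
        ∑ i, tailP μ (fun ω => c 0 * X i ω) x) 1 atTop K

end

/-!
Write `T` for the tail of `X_{n:n}` and rescale `x = c₀ z`. If the lower order statistics are
all below `t h(z)` in absolute value, the weighted sum is within `δ h(z)` of `c₀ X_{n:n}`;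
otherwise two different components are large at once: both above `L h(z)`, or one above `t h(z)`
in absolute value and another above `z - C h(z)`. The Gumbel property gives
`T(z ∓ δ h(z)) ~ exp(±δ) T(z)`, while (DS1), (DS2) and `h(z - C h(z)) ≤ 2 h(z)` make the double
events `o(T(z))`. The bounds see `c` only through `a ≤ c₀` and `c_i ≤ d`, and `c₀ ≤ b` keeps the
rescaling uniform. For the second relation, Bonferroni squeezes `∑ P(X_i > z)` between `T(z)` and
`T(z)` plus the double exceedances, which are `o(T(z))` by (DS1) because `h(z) = o(z)`.
-/

open MeasureTheory Filter Topology Finset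

section Sorting

variable {Ω : Type*} {n : ℕ} (X : Fin n → Ω → ℝ)

theorem exists_perm_ordDesc_eq (ω : Ω) :
    ∃ σ : Equiv.Perm (Fin n), Antitone (fun i => X (σ i) ω) ∧ ∀ i, ordDesc X i ω = X (σ i) ω := by
  set f : Fin n → ℝ := fun j => X j ω
  have hanti : Antitone (f ∘ Fin.revPerm.trans (Tuple.sort f)) :=
    fun i j hij => Tuple.monotone_sort f (Fin.rev_le_rev.2 hij)
  refine ⟨Fin.revPerm.trans (Tuple.sort f), hanti, fun i => ?_⟩
  have hsort : (List.ofFn f).mergeSort (fun a b => decide (b ≤ a)) =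
      List.ofFn (f ∘ Fin.revPerm.trans (Tuple.sort f)) :=
    List.Perm.eq_of_sortedGE List.sortedGE_mergeSort hanti.sortedGE_ofFn
      ((List.mergeSort_perm _ _).trans (Equiv.Perm.ofFn_comp_perm _ f).symm)
  simp [ordDesc, f, hsort]

theorem le_maxRV (i : Fin n) (ω : Ω) : X i ω ≤ maxRV X ω :=
  le_ciSup (f := fun j => X j ω) (Set.finite_range _).bddAbove i

theorem ordDesc_zero [NeZero n] : ordDesc X 0 = maxRV X := by
  funext ω
  obtain ⟨σ, hanti, hσ⟩ := exists_perm_ordDesc_eq X ω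
  refine le_antisymm (hσ 0 ▸ le_maxRV X _ ω) (ciSup_le fun j => ?_)
  simpa [hσ] using hanti (Fin.zero_le (σ.symm j))

end Sorting

section WeightedSums

variable {ι : Type*} {s : Finset ι} {c g : ι → ℝ} {d B : ℝ}

theorem sum_mul_le_card_mul (hc : ∀ i ∈ s, c i ∈ Set.Icc 0 d) (hB : 0 ≤ B)
    (hg : ∀ i ∈ s, g i ≤ B) : ∑ i ∈ s, c i * g i ≤ #s * (d * B) := by
  rw [← nsmul_eq_mul]
  refine sum_le_card_nsmul _ _ _ fun i hi => ?_
  calc c i * g i ≤ c i * B := mul_le_mul_of_nonneg_left (hg i hi) (hc i hi).1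
    _ ≤ d * B := mul_le_mul_of_nonneg_right (hc i hi).2 hB

theorem abs_sum_mul_le_card_mul (hc : ∀ i ∈ s, c i ∈ Set.Icc 0 d)
    (hg : ∀ i ∈ s, |g i| ≤ B) : |∑ i ∈ s, c i * g i| ≤ #s * (d * B) := by
  rw [← nsmul_eq_mul]
  refine (abs_sum_le_sum_abs _ _).trans (sum_le_card_nsmul _ _ _ fun i hi => ?_)
  rw [abs_mul, abs_of_nonneg (hc i hi).1]
  exact mul_le_mul (hc i hi).2 (hg i hi) (abs_nonneg _) ((hc i hi).1.trans (hc i hi).2)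

end WeightedSums

section Alternatives

variable {n : ℕ} [NeZero n] {g c : Fin n → ℝ} {a d t δ L C r z : ℝ}

theorem card_erase_zero_mul_le {B : ℝ} (hB : 0 ≤ B) :
    (#(univ.erase (0 : Fin n)) : ℝ) * B ≤ n * B :=
  mul_le_mul_of_nonneg_right (by exact_mod_cast (card_erase_le).trans (card_fin n).le) hB

theorem nat_mul_le_weight_mul (ha : 0 < a) (hc0 : a ≤ c 0) (hd : 0 ≤ d) (ht : 0 ≤ t)
    (hr : 0 < r) (htδ : n * d * t ≤ a * δ) : n * (d * (t * r)) ≤ c 0 * (δ * r) := by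
  have hδ : 0 ≤ δ := nonneg_of_mul_nonneg_right (le_trans (by positivity) htδ) ha
  calc (n : ℝ) * (d * (t * r)) = n * d * t * r := by ring
    _ ≤ a * δ * r := by gcongr
    _ ≤ c 0 * (δ * r) := by rw [mul_assoc]; gcongr

theorem lt_or_exists_pair_of_lt_weighted_sum (hg : ∀ i, g i ≤ g 0) (ha : 0 < a) (hc0 : a ≤ c 0)
    (hc : ∀ i ∈ univ.erase 0, c i ∈ Set.Icc 0 d) (hd : 0 ≤ d) (hr : 0 < r) (ht : 0 ≤ t)
    (hL : 0 ≤ L) (htδ : n * d * t ≤ a * δ) (hLC : n * d * L ≤ a * C)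
    (hsum : c 0 * z < ∑ i, c i * g i) :
    z - δ * r < g 0 ∨ (∃ i ≠ 0, L * r < g i ∧ L * r < g 0) ∨
      ∃ i ≠ 0, t * r < |g i| ∧ z - C * r < g 0 := by
  have hc0' : 0 < c 0 := ha.trans_le hc0
  rw [← add_sum_erase _ _ (mem_univ 0)] at hsum
  by_cases hsmall : ∀ i ∈ univ.erase 0, |g i| ≤ t * r
  · have hrest := (le_abs_self _).trans ((abs_sum_mul_le_card_mul hc hsmall).trans
      ((card_erase_zero_mul_le (by positivity)).trans (nat_mul_le_weight_mul ha hc0 hd ht hr htδ)))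
    exact Or.inl (lt_of_mul_lt_mul_left (by linarith) hc0'.le)
  push Not at hsmall
  obtain ⟨i, hi, hti⟩ := hsmall
  by_cases hlarge : ∃ j ≠ 0, L * r < g j
  · obtain ⟨j, hj, hLj⟩ := hlarge
    exact Or.inr (Or.inl ⟨j, hj, hLj, hLj.trans_le (hg j)⟩)
  push Not at hlarge
  have hrest := (sum_mul_le_card_mul hc (by positivity)
    fun j hj => hlarge j (ne_of_mem_erase hj)).trans ((card_erase_zero_mul_le (by positivity)).trans
      (nat_mul_le_weight_mul ha hc0 hd hL hr hLC))
  exact Or.inr (Or.inr ⟨i, ne_of_mem_erase hi, hti, lt_of_mul_lt_mul_left (by linarith) hc0'.le⟩)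

theorem lt_weighted_sum_or_exists_of_lt (ha : 0 < a) (hc0 : a ≤ c 0)
    (hc : ∀ i ∈ univ.erase 0, c i ∈ Set.Icc 0 d) (hd : 0 ≤ d) (hr : 0 < r) (ht : 0 ≤ t)
    (hδ : 0 ≤ δ) (htδ : n * d * t ≤ a * δ) (hmax : z + δ * r < g 0) :
    c 0 * z < ∑ i, c i * g i ∨ ∃ i ≠ 0, t * r < |g i| ∧ z < g 0 := by
  by_cases hsmall : ∀ i ∈ univ.erase 0, |g i| ≤ t * r
  · have hrest := (neg_abs_le _).trans' (neg_le_neg ((abs_sum_mul_le_card_mul hc hsmall).trans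
      ((card_erase_zero_mul_le (by positivity)).trans (nat_mul_le_weight_mul ha hc0 hd ht hr htδ))))
    have := mul_lt_mul_of_pos_left hmax (ha.trans_le hc0)
    rw [← add_sum_erase _ _ (mem_univ 0)]
    exact Or.inl (by linarith)
  push Not at hsmall
  obtain ⟨i, hi, hti⟩ := hsmall
  exact Or.inr ⟨i, ne_of_mem_erase hi, hti, by nlinarith⟩

end Alternatives

theorem sum_measureReal_le_measureReal_biUnion_add {Ω ι : Type*} [MeasurableSpace Ω]
    (μ : Measure Ω) [IsFiniteMeasure μ] [DecidableEq ι] {A : ι → Set Ω} (s : Finset ι)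
    (hA : ∀ i ∈ s, MeasurableSet (A i)) :
    ∑ i ∈ s, μ.real (A i) ≤ μ.real (⋃ i ∈ s, A i) + ∑ p ∈ s.offDiag, μ.real (A p.1 ∩ A p.2) := by
  induction s using Finset.induction_on with
  | empty => simp
  | insert a s ha ih =>
    have hU : MeasurableSet (⋃ i ∈ s, A i) :=
      s.measurableSet_biUnion fun i hi => hA i (mem_insert_of_mem hi)
    have hcap : μ.real (A a ∩ ⋃ i ∈ s, A i) ≤ ∑ j ∈ s, μ.real (A a ∩ A j) := by
      rw [Set.inter_iUnion₂]
      exact measureReal_biUnion_finset_le _ _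
    have hpairs : ∑ p ∈ s.offDiag, μ.real (A p.1 ∩ A p.2) + ∑ j ∈ s, μ.real (A a ∩ A j) ≤
        ∑ p ∈ (insert a s).offDiag, μ.real (A p.1 ∩ A p.2) := by
      have hdisj : Disjoint s.offDiag ({a} ×ˢ s) :=
        disjoint_left.2 fun p hp hq => ha (by aesop)
      rw [offDiag_insert ha]
      refine le_of_eq_of_le ?_ (sum_le_sum_of_subset_of_nonneg subset_union_left
        fun _ _ _ => measureReal_nonneg)
      rw [sum_union hdisj, sum_product, sum_singleton]
    rw [sum_insert ha, set_biUnion_insert]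
    linarith [measureReal_union_add_inter (μ := μ) (s := A a) hU (measure_ne_top _ _)
      (measure_ne_top _ _), ih fun i hi => hA i (mem_insert_of_mem hi)]

/-- `T = 1 - F` for some `F ∈ GMDA(h)` with infinite upper endpoint. -/
structure IsGumbelTail (T h : ℝ → ℝ) : Prop where
  pos : ∀ x, 0 < T x
  antitone : Antitone T
  scale_pos : ∀ x, 0 < h x
  tendsto_ratio : ∀ y, Tendsto (fun x => T (x + y * h x) / T x) atTop (𝓝 (Real.exp (-y)))

namespace IsGumbelTail

variable {T h : ℝ → ℝ}

theorem tendsto_ratio_sub (hT : IsGumbelTail T h) (C : ℝ) :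
    Tendsto (fun x => T (x - C * h x) / T x) atTop (𝓝 (Real.exp C)) := by
  simpa [sub_eq_add_neg] using hT.tendsto_ratio (-C)

/-- A positive limit of `T` would force every ratio `T (x + y h x) / T x` to tend to `1`. -/
theorem tendsto_zero (hT : IsGumbelTail T h) : Tendsto T atTop (𝓝 0) := by
  have hbdd : BddBelow (Set.range T) := ⟨0, Set.forall_mem_range.2 fun x => (hT.pos x).le⟩
  have hinf := tendsto_atTop_ciInf hT.antitone hbdd
  suffices ⨅ x, T x = 0 by rwa [this] at hinf
  by_contra hne
  have hpos : 0 < ⨅ x, T x := (le_ciInf fun x => (hT.pos x).le).lt_of_ne' hne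
  have hone : Tendsto (fun x => (⨅ x, T x) / T x) atTop (𝓝 1) := by
    have := (tendsto_const_nhds (x := ⨅ x, T x)).div hinf hpos.ne'
    rwa [div_self hpos.ne'] at this
  have hle : 1 ≤ Real.exp (-1) := le_of_tendsto_of_tendsto' hone (hT.tendsto_ratio 1) fun x =>
    div_le_div_of_nonneg_right (ciInf_le hbdd _) (hT.pos x).le
  linarith [Real.exp_lt_one_iff.2 (neg_one_lt_zero : (-1 : ℝ) < 0)]

/-- Where `h x ≥ ε x`, the point `x - h x / ε` is `≤ 0`, so the bounded ratio at `y = -1/ε`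
would be at least `T 0 / T x → ∞`. -/
theorem eventually_lt_mul (hT : IsGumbelTail T h) {ε : ℝ} (hε : 0 < ε) :
    ∀ᶠ x in atTop, h x < ε * x := by
  obtain ⟨E, hE, hbound⟩ : ∃ E > 0, ∀ᶠ x in atTop, T (x + -ε⁻¹ * h x) / T x < E :=
    ⟨_, by positivity, (hT.tendsto_ratio _).eventually_lt_const (lt_add_one _)⟩
  filter_upwards [hbound, hT.tendsto_zero.eventually_lt_const (div_pos (hT.pos 0) hE),
    eventually_ge_atTop 0] with x hratio hsmall hx
  by_contra! hle
  have hneg : x + -ε⁻¹ * h x ≤ 0 := by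
    have : x ≤ ε⁻¹ * h x := by rw [inv_mul_eq_div, le_div_iff₀ hε]; linarith
    linarith
  rw [div_lt_iff₀ (hT.pos x)] at hratio
  rw [lt_div_iff₀ hE] at hsmall
  linarith [hT.antitone hneg]

theorem tendsto_sub_mul (hT : IsGumbelTail T h) (C : ℝ) :
    Tendsto (fun x => x - C * h x) atTop atTop := by
  refine tendsto_atTop_mono' _ ?_ (tendsto_id.atTop_div_const two_pos)
  filter_upwards [hT.eventually_lt_mul (by positivity : (0 : ℝ) < (2 * (|C| + 1))⁻¹),
    eventually_ge_atTop 0] with x hx hx0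
  have hCh : C * h x ≤ |C| * h x :=
    mul_le_mul_of_nonneg_right (le_abs_self C) (hT.scale_pos x).le
  have : (|C| + 1) * h x ≤ x / 2 := by
    rw [inv_mul_eq_div, lt_div_iff₀ (by positivity)] at hx
    linarith
  simp only [id]
  nlinarith [hT.scale_pos x]

/-- If `h` jumped by a factor `2` from `x` to `x - C h x`, then `x - C h x + (C/2) h (x - C h x)`
would exceed `x`, against `exp (-C/2) > exp (-C)` for the corresponding tail ratios. -/
theorem eventually_scale_sub_le (hT : IsGumbelTail T h) {C : ℝ} (hC : 0 ≤ C) :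
    ∀ᶠ x in atTop, h (x - C * h x) ≤ 2 * h x := by
  rcases hC.eq_or_lt with rfl | hC
  · exact Eventually.of_forall fun x => by
      simp only [zero_mul, sub_zero]; linarith [hT.scale_pos x]
  have hshift := (hT.tendsto_ratio (C / 2)).comp (hT.tendsto_sub_mul C)
  have hback : Tendsto (fun x => T x / T (x - C * h x)) atTop (𝓝 (Real.exp (-C))) := by
    simpa [Real.exp_neg] using (hT.tendsto_ratio_sub C).inv₀ (Real.exp_pos C).ne'
  filter_upwards [hback.eventually_lt hshift (Real.exp_lt_exp.2 (by linarith))] with x hx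
  by_contra! hlt
  have hle : x ≤ x - C * h x + C / 2 * h (x - C * h x) := by nlinarith
  exact hx.not_ge (div_le_div_of_nonneg_right (hT.antitone hle) (hT.pos _).le)

end IsGumbelTail

theorem TendstoUniformlyOn.of_comp_mul {ι β : Type*} [UniformSpace β] {F : ℝ → ι → β}
    {f : ι → β} {K : Set ι} {s : ι → ℝ} {b : ℝ} (hs : ∀ c ∈ K, s c ∈ Set.Ioc 0 b)
    (h : TendstoUniformlyOn (fun z c => F (s c * z) c) f atTop K) :
    TendstoUniformlyOn F f atTop K := by
  intro u hu
  obtain ⟨Z, hZ⟩ := eventually_atTop.1 (h u hu)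
  filter_upwards [eventually_ge_atTop (b * max Z 0)] with x hx c hc
  obtain ⟨hs0, hsb⟩ := hs c hc
  have hZx : Z ≤ x / s c := by
    rw [le_div_iff₀ hs0]
    calc Z * s c ≤ max Z 0 * s c := by gcongr; exact le_max_left _ _
      _ ≤ max Z 0 * b := by gcongr
      _ ≤ x := by linarith
  simpa [mul_div_cancel₀ _ hs0.ne'] using hZ _ hZx c hc

theorem tendstoUniformlyOn_one_of_exp_bounds {ι : Type*} {F : ℝ → ι → ℝ} {K : Set ι}
    (lo up : ℝ → ℝ → ℝ) (hlo : ∀ δ > 0, Tendsto (lo δ) atTop (𝓝 (Real.exp (-δ))))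
    (hup : ∀ δ > 0, Tendsto (up δ) atTop (𝓝 (Real.exp δ)))
    (hF : ∀ δ > 0, ∀ᶠ z in atTop, ∀ c ∈ K, lo δ z ≤ F z c ∧ F z c ≤ up δ z) :
    TendstoUniformlyOn F 1 atTop K := by
  rw [Metric.tendstoUniformlyOn_iff]
  intro ε hε
  have hexp : ∀ᶠ δ in 𝓝[>] (0 : ℝ), 1 - ε < Real.exp (-δ) ∧ Real.exp δ < 1 + ε := by
    have hneg : Tendsto (fun δ => Real.exp (-δ)) (𝓝 0) (𝓝 1) :=
      (Real.continuous_exp.comp continuous_neg).tendsto' 0 1 (by simp)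
    have hpos : Tendsto Real.exp (𝓝 0) (𝓝 1) := Real.continuous_exp.tendsto' 0 1 (by simp)
    exact nhdsWithin_le_nhds ((hneg.eventually_const_lt (by linarith)).and
      (hpos.eventually_lt_const (by linarith)))
  obtain ⟨δ, ⟨hlo1, hup1⟩, hδ⟩ := (hexp.and self_mem_nhdsWithin).exists
  filter_upwards [hF δ hδ, (hlo δ hδ).eventually_const_lt hlo1,
    (hup δ hδ).eventually_lt_const hup1] with z hz hloz hupz c hc
  rw [Pi.one_apply, Real.dist_eq, abs_lt]
  constructor <;> linarith [hz c hc]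

theorem endFilter_eq_atTop {T : ℝ → ℝ} (hT : ∀ x, 0 < T x) : endFilter T = atTop := by
  rw [endFilter, if_pos]
  rw [upEnd, show {x | 0 < T x} = Set.univ from Set.eq_univ_of_forall hT, Set.image_univ,
    sSup_eq_top]
  intro b hb
  obtain ⟨x, hbx, -⟩ := EReal.lt_iff_exists_real_btwn.1 hb
  exact ⟨x, Set.mem_range_self x, hbx⟩

section Tails

variable {Ω : Type*} [MeasurableSpace Ω] (μ : Measure Ω)

theorem tailP_const_mul (Y : Ω → ℝ) {c : ℝ} (hc : 0 < c) (x : ℝ) :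
    tailP μ (fun ω => c * Y ω) (c * x) = tailP μ Y x := by
  simp only [tailP, mul_lt_mul_iff_right₀ hc]

theorem tailP_antitone [IsFiniteMeasure μ] (Y : Ω → ℝ) : Antitone (tailP μ Y) :=
  fun _ _ hxy => measureReal_mono fun _ (hω : _ < Y _) => hxy.trans_lt hω

variable {n : ℕ} (X : Fin n → Ω → ℝ)

theorem isGumbelTail_of_memGMDA [IsFiniteMeasure μ] {h : ℝ → ℝ}
    (hpos : ∀ x, 0 < tailP μ (maxRV X) x) (hG : MemGMDA (tailP μ (maxRV X)) h) :
    IsGumbelTail (tailP μ (maxRV X)) h where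
  pos := hpos
  antitone := tailP_antitone μ _
  scale_pos := hG.1
  tendsto_ratio y := endFilter_eq_atTop hpos ▸ hG.2 y

end Tails

section Events

variable {Ω : Type*} {n : ℕ} [NeZero n] (X : Fin n → Ω → ℝ) {c : Fin n → ℝ}
  {a d t δ L C r z : ℝ}

theorem setOf_lt_maxRV (x : ℝ) : {ω | x < maxRV X ω} = ⋃ i ∈ univ, {ω | x < X i ω} := by
  ext ω
  simp [maxRV, lt_ciSup_iff (Set.finite_range fun i => X i ω).bddAbove]

theorem mem_offDiag_perm (σ : Equiv.Perm (Fin n)) {i : Fin n} (hi : i ≠ 0) :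
    (σ i, σ 0) ∈ (univ : Finset (Fin n)).offDiag := by
  simpa using hi

theorem setOf_lt_weighted_sum_subset (ha : 0 < a) (hc0 : a ≤ c 0)
    (hc : ∀ i ∈ univ.erase 0, c i ∈ Set.Icc 0 d) (hd : 0 ≤ d) (hr : 0 < r) (ht : 0 ≤ t)
    (hL : 0 ≤ L) (htδ : n * d * t ≤ a * δ) (hLC : n * d * L ≤ a * C) :
    {ω | c 0 * z < ∑ i, c i * ordDesc X i ω} ⊆ {ω | z - δ * r < maxRV X ω} ∪
      (⋃ p ∈ (univ : Finset (Fin n)).offDiag, {ω | L * r < X p.1 ω ∧ L * r < X p.2 ω}) ∪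
      ⋃ p ∈ (univ : Finset (Fin n)).offDiag, {ω | t * r < |X p.1 ω| ∧ z - C * r < X p.2 ω} := by
  intro ω (hω : c 0 * z < ∑ i, c i * ordDesc X i ω)
  obtain ⟨σ, hanti, hσ⟩ := exists_perm_ordDesc_eq X ω
  have hmax : X (σ 0) ω = maxRV X ω := by rw [← hσ, ordDesc_zero]
  simp only [hσ] at hω
  rcases lt_or_exists_pair_of_lt_weighted_sum (fun i => hanti (Fin.zero_le i)) ha hc0 hc hd hr
    ht hL htδ hLC hω with h | ⟨i, hi, h⟩ | ⟨i, hi, h⟩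
  · exact Or.inl (Or.inl (show z - δ * r < maxRV X ω by rwa [← hmax]))
  · exact Or.inl (Or.inr (Set.mem_biUnion (mem_offDiag_perm σ hi) h))
  · exact Or.inr (Set.mem_biUnion (mem_offDiag_perm σ hi) h)

theorem setOf_lt_maxRV_subset (ha : 0 < a) (hc0 : a ≤ c 0)
    (hc : ∀ i ∈ univ.erase 0, c i ∈ Set.Icc 0 d) (hd : 0 ≤ d) (hr : 0 < r) (ht : 0 ≤ t)
    (hδ : 0 ≤ δ) (htδ : n * d * t ≤ a * δ) :
    {ω | z + δ * r < maxRV X ω} ⊆ {ω | c 0 * z < ∑ i, c i * ordDesc X i ω} ∪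
      ⋃ p ∈ (univ : Finset (Fin n)).offDiag, {ω | t * r < |X p.1 ω| ∧ z < X p.2 ω} := by
  intro ω (hω : z + δ * r < maxRV X ω)
  obtain ⟨σ, -, hσ⟩ := exists_perm_ordDesc_eq X ω
  rw [← ordDesc_zero, hσ] at hω
  rcases lt_weighted_sum_or_exists_of_lt (g := fun i => X (σ i) ω) ha hc0 hc hd hr ht hδ htδ hω
    with h | ⟨i, hi, h⟩
  · exact Or.inl (show c 0 * z < ∑ i, c i * ordDesc X i ω by simpa only [hσ] using h)
  · exact Or.inr (Set.mem_biUnion (mem_offDiag_perm σ hi) h)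

end Events

section TailBounds

variable {Ω : Type*} [MeasurableSpace Ω] (μ : Measure Ω) [IsFiniteMeasure μ] {n : ℕ} [NeZero n]
  (X : Fin n → Ω → ℝ) {c : Fin n → ℝ} {a d t δ L C r z : ℝ}

theorem tailP_weighted_sum_le (ha : 0 < a) (hc0 : a ≤ c 0)
    (hc : ∀ i ∈ univ.erase 0, c i ∈ Set.Icc 0 d) (hd : 0 ≤ d) (hr : 0 < r) (ht : 0 ≤ t)
    (hL : 0 ≤ L) (htδ : n * d * t ≤ a * δ) (hLC : n * d * L ≤ a * C) :
    tailP μ (fun ω => ∑ i, c i * ordDesc X i ω) (c 0 * z) ≤ tailP μ (maxRV X) (z - δ * r) +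
      ∑ p ∈ (univ : Finset (Fin n)).offDiag, μ.real {ω | L * r < X p.1 ω ∧ L * r < X p.2 ω} +
      ∑ p ∈ (univ : Finset (Fin n)).offDiag,
        μ.real {ω | t * r < |X p.1 ω| ∧ z - C * r < X p.2 ω} := by
  refine (measureReal_mono (setOf_lt_weighted_sum_subset X ha hc0 hc hd hr ht hL htδ hLC)).trans ?_
  refine (measureReal_union_le _ _).trans (add_le_add ((measureReal_union_le _ _).trans ?_)
    (measureReal_biUnion_finset_le _ _))
  exact add_le_add le_rfl (measureReal_biUnion_finset_le _ _)

theorem tailP_maxRV_sub_le (ha : 0 < a) (hc0 : a ≤ c 0)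
    (hc : ∀ i ∈ univ.erase 0, c i ∈ Set.Icc 0 d) (hd : 0 ≤ d) (hr : 0 < r) (ht : 0 ≤ t)
    (hδ : 0 ≤ δ) (htδ : n * d * t ≤ a * δ) :
    tailP μ (maxRV X) (z + δ * r) -
        ∑ p ∈ (univ : Finset (Fin n)).offDiag, μ.real {ω | t * r < |X p.1 ω| ∧ z < X p.2 ω} ≤
      tailP μ (fun ω => ∑ i, c i * ordDesc X i ω) (c 0 * z) := by
  refine sub_le_iff_le_add.2 ((measureReal_mono
    (setOf_lt_maxRV_subset (z := z) X ha hc0 hc hd hr ht hδ htδ)).trans ?_)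
  exact (measureReal_union_le _ _).trans (add_le_add le_rfl (measureReal_biUnion_finset_le _ _))

end TailBounds

section Negligible

variable {Ω : Type*} [MeasurableSpace Ω] {μ : Measure Ω} {n : ℕ} {X : Fin n → Ω → ℝ} {h : ℝ → ℝ}

theorem DS2.tendsto_of_mem_offDiag {L : ℝ} (hDS2 : DS2 μ X h L) {p : Fin n × Fin n}
    (hp : p ∈ (univ : Finset (Fin n)).offDiag) :
    Tendsto (fun x => μ.real {ω | L * h x < X p.1 ω ∧ L * h x < X p.2 ω} /
      tailP μ (maxRV X) x) atTop (𝓝 0) := by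
  rcases (mem_offDiag.1 hp).2.2.lt_or_gt with hlt | hlt
  · exact hDS2 _ _ hlt
  · simpa only [and_comm, ← measureReal_def] using hDS2 _ _ hlt

theorem tendsto_div_tailP_maxRV_of_forall_offDiag {q : Fin n × Fin n → ℝ → ℝ}
    (hq : ∀ p ∈ (univ : Finset (Fin n)).offDiag,
      Tendsto (fun x => q p x / tailP μ (maxRV X) x) atTop (𝓝 0)) :
    Tendsto (fun x => (∑ p ∈ (univ : Finset (Fin n)).offDiag, q p x) / tailP μ (maxRV X) x)
      atTop (𝓝 0) := by
  simpa [sum_div] using tendsto_finsetSum _ hq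

theorem DS1.tendsto_of_mem_offDiag (hDS1 : DS1 μ X h) {t : ℝ} (ht : 0 < t) {p : Fin n × Fin n}
    (hp : p ∈ (univ : Finset (Fin n)).offDiag) :
    Tendsto (fun x => μ.real {ω | t * h x < |X p.1 ω| ∧ x < X p.2 ω} / tailP μ (maxRV X) x)
      atTop (𝓝 0) :=
  hDS1 t ht _ _ (mem_offDiag.1 hp).2.2

/-- (DS1) survives moving the threshold of `X j` down by `C h x`, because
`h (x - C h x) ≤ 2 h x` and `T (x - C h x) / T x → exp C`. -/
theorem DS1.tendsto_sub [IsFiniteMeasure μ] (hDS1 : DS1 μ X h)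
    (hG : IsGumbelTail (tailP μ (maxRV X)) h) {t C : ℝ} (ht : 0 < t) (hC : 0 ≤ C) {i j : Fin n}
    (hij : i ≠ j) :
    Tendsto (fun x => μ.real {ω | t * h x < |X i ω| ∧ x - C * h x < X j ω} /
      tailP μ (maxRV X) x) atTop (𝓝 0) := by
  have hprod := ((hDS1 (t / 2) (by positivity) i j hij).comp (hG.tendsto_sub_mul C)).mul
    (hG.tendsto_ratio_sub C)
  rw [zero_mul] at hprod
  refine squeeze_zero' (Eventually.of_forall fun x => div_nonneg measureReal_nonneg (hG.pos x).le)
    ?_ hprod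
  filter_upwards [hG.eventually_scale_sub_le hC] with x hx
  have hsub : {ω | t * h x < |X i ω| ∧ x - C * h x < X j ω} ⊆
      {ω | t / 2 * h (x - C * h x) < |X i ω| ∧ x - C * h x < X j ω} :=
    fun ω hω => ⟨by nlinarith [hω.1], hω.2⟩
  refine (div_le_div_of_nonneg_right (measureReal_mono hsub) (hG.pos x).le).trans_eq ?_
  rw [Function.comp_apply, div_mul_div_cancel₀ (hG.pos _).ne']
  rfl

end Negligible

section MaxSum

variable {Ω : Type*} [MeasurableSpace Ω] (μ : Measure Ω) [IsFiniteMeasure μ] {n : ℕ} [NeZero n]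
  (X : Fin n → Ω → ℝ) {h : ℝ → ℝ}

theorem tendstoUniformlyOn_tailP_weighted_sum_div (hG : IsGumbelTail (tailP μ (maxRV X)) h)
    (hDS1 : DS1 μ X h) {L : ℝ} (hL : 0 < L) (hDS2 : DS2 μ X h L) {a d : ℝ} (ha : 0 < a)
    (hd : 0 ≤ d) (b : ℝ) :
    TendstoUniformlyOn
      (fun x (c : Fin n → ℝ) =>
        tailP μ (fun ω => ∑ i, c i * ordDesc X i ω) x /
          tailP μ (fun ω => c 0 * maxRV X ω) x) 1 atTop
      {c : Fin n → ℝ | c 0 ∈ Set.Icc a b ∧ ∀ i : Fin n, i ≠ 0 → c i ∈ Set.Icc 0 d} := by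
  set T := tailP μ (maxRV X)
  obtain ⟨t, ht, htδ⟩ : ∃ t : ℝ → ℝ, (∀ δ > 0, 0 < t δ) ∧ ∀ δ > 0, n * d * t δ ≤ a * δ := by
    refine ⟨fun δ => a * δ / (n * d + 1), fun δ hδ => by positivity, fun δ hδ => ?_⟩
    rw [mul_div_assoc', div_le_iff₀ (by positivity)]
    nlinarith [mul_pos ha hδ]
  obtain ⟨C, hC, hLC⟩ : ∃ C : ℝ, 0 ≤ C ∧ n * d * L ≤ a * C :=
    ⟨n * d * L / a, by positivity, by rw [mul_div_cancel₀ _ ha.ne']⟩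
  refine TendstoUniformlyOn.of_comp_mul (s := fun c => c 0) (b := b)
    (fun c hc => ⟨ha.trans_le hc.1.1, hc.1.2⟩) ?_
  refine tendstoUniformlyOn_one_of_exp_bounds
    (fun δ z => (T (z + δ * h z) - ∑ p ∈ (univ : Finset (Fin n)).offDiag,
      μ.real {ω | t δ * h z < |X p.1 ω| ∧ z < X p.2 ω}) / T z)
    (fun δ z => (T (z - δ * h z) + ∑ p ∈ (univ : Finset (Fin n)).offDiag,
      μ.real {ω | L * h z < X p.1 ω ∧ L * h z < X p.2 ω} + ∑ p ∈ (univ : Finset (Fin n)).offDiag,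
      μ.real {ω | t δ * h z < |X p.1 ω| ∧ z - C * h z < X p.2 ω}) / T z)
    (fun δ hδ => ?_) (fun δ hδ => ?_) (fun δ hδ => Eventually.of_forall fun z c hc => ?_)
  · simpa [sub_div] using (hG.tendsto_ratio δ).sub (tendsto_div_tailP_maxRV_of_forall_offDiag
      fun p hp => hDS1.tendsto_of_mem_offDiag (ht δ hδ) hp)
  · simpa [add_div] using ((hG.tendsto_ratio_sub δ).add
      (tendsto_div_tailP_maxRV_of_forall_offDiag fun p hp => hDS2.tendsto_of_mem_offDiag hp)).add
      (tendsto_div_tailP_maxRV_of_forall_offDiag fun p hp =>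
        hDS1.tendsto_sub hG (ht δ hδ) hC (mem_offDiag.1 hp).2.2)
  have hc' : ∀ i ∈ univ.erase 0, c i ∈ Set.Icc 0 d := fun i hi => hc.2 i (ne_of_mem_erase hi)
  simp only [tailP_const_mul μ _ (ha.trans_le hc.1.1)]
  exact ⟨div_le_div_of_nonneg_right (tailP_maxRV_sub_le μ X ha hc.1.1 hc' hd (hG.scale_pos z)
      (ht δ hδ).le hδ.le (htδ δ hδ)) (hG.pos z).le,
    div_le_div_of_nonneg_right (tailP_weighted_sum_le μ X ha hc.1.1 hc' hd (hG.scale_pos z)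
      (ht δ hδ).le hL.le (htδ δ hδ) hLC) (hG.pos z).le⟩

/-- The sum of the marginal tails exceeds the tail of the maximum only by the double exceedances,
which (DS1) makes negligible since `h x < x` eventually. -/
theorem tendsto_tailP_maxRV_div_sum (hXm : ∀ i, Measurable (X i))
    (hG : IsGumbelTail (tailP μ (maxRV X)) h) (hDS1 : DS1 μ X h) :
    Tendsto (fun x => tailP μ (maxRV X) x / ∑ i, tailP μ (X i) x) atTop (𝓝 1) := by
  set T := tailP μ (maxRV X)
  set S := fun x => ∑ i, tailP μ (X i) x
  set P := fun x => ∑ p ∈ (univ : Finset (Fin n)).offDiag,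
    μ.real ({ω | x < X p.1 ω} ∩ {ω | x < X p.2 ω})
  have hTS : ∀ x, T x ≤ S x := fun x =>
    (congrArg μ.real (setOf_lt_maxRV X x)).trans_le (measureReal_biUnion_finset_le _ _)
  have hST : ∀ x, S x ≤ T x + P x := fun x => by
    have := sum_measureReal_le_measureReal_biUnion_add μ univ
      (A := fun i => {ω | x < X i ω}) fun i _ => measurableSet_lt measurable_const (hXm i)
    rw [← setOf_lt_maxRV] at this
    exact this
  have hP : Tendsto (fun x => P x / T x) atTop (𝓝 0) := by
    refine tendsto_div_tailP_maxRV_of_forall_offDiag fun p hp => ?_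
    refine squeeze_zero' (Eventually.of_forall fun x => div_nonneg measureReal_nonneg (hG.pos x).le)
      ?_ (hDS1.tendsto_of_mem_offDiag one_pos hp)
    filter_upwards [hG.eventually_lt_mul one_pos] with x hx
    refine div_le_div_of_nonneg_right (measureReal_mono fun ω hω => ⟨?_, hω.2⟩) (hG.pos x).le
    linarith [le_abs_self (X p.1 ω), hω.1.out]
  have hSdivT : Tendsto (fun x => S x / T x) atTop (𝓝 1) := by
    refine tendsto_of_tendsto_of_tendsto_of_le_of_le tendsto_const_nhds
      (by simpa using tendsto_const_nhds.add hP) (fun x => (one_le_div (hG.pos x)).2 (hTS x))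
      fun x => ?_
    rw [← div_self (hG.pos x).ne', ← add_div]
    exact div_le_div_of_nonneg_right (hST x) (hG.pos x).le
  simpa using hSdivT.inv₀ one_ne_zero

theorem tendstoUniformlyOn_tailP_maxRV_div_sum (hXm : ∀ i, Measurable (X i))
    (hG : IsGumbelTail (tailP μ (maxRV X)) h) (hDS1 : DS1 μ X h) {a : ℝ} (ha : 0 < a) (b d : ℝ) :
    TendstoUniformlyOn
      (fun x (c : Fin n → ℝ) =>
        tailP μ (fun ω => c 0 * maxRV X ω) x / ∑ i, tailP μ (fun ω => c 0 * X i ω) x) 1 atTop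
      {c : Fin n → ℝ | c 0 ∈ Set.Icc a b ∧ ∀ i : Fin n, i ≠ 0 → c i ∈ Set.Icc 0 d} := by
  refine TendstoUniformlyOn.of_comp_mul (s := fun c => c 0) (b := b)
    (fun c hc => ⟨ha.trans_le hc.1.1, hc.1.2⟩) ?_
  refine ((tendsto_tailP_maxRV_div_sum μ X hXm hG hDS1).tendstoUniformlyOn_const _).congr
    (Eventually.of_forall fun z c hc => ?_)
  simp only [tailP_const_mul μ _ (ha.trans_le hc.1.1)]

end MaxSum

theorem weighted_order_stats_tail_assumptionA_general
    {Ω : Type*} [MeasurableSpace Ω] (μ : Measure Ω) [IsProbabilityMeasure μ]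
    {n : ℕ} [NeZero n] (X : Fin n → Ω → ℝ) (hXm : ∀ i, Measurable (X i))
    (hA : AssumptionA μ X)
    (a b d : ℝ) (ha : 0 < a) (hd : 0 ≤ d) :
    UnifMaxSum μ X
      {c : Fin n → ℝ | c 0 ∈ Set.Icc a b ∧ ∀ i : Fin n, i ≠ 0 → c i ∈ Set.Icc 0 d} := by
  obtain ⟨h, hpos, hGMDA, hDS1, L, hL, hDS2⟩ := hA
  have hG := isGumbelTail_of_memGMDA μ X hpos hGMDA
  exact ⟨tendstoUniformlyOn_tailP_weighted_sum_div μ X hG hDS1 hL hDS2 ha hd b,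
    tendstoUniformlyOn_tailP_maxRV_div_sum μ X hXm hG hDS1 ha b d⟩

/-- Theorem 3.1 under Assumption A. -/
theorem weighted_order_stats_tail_assumptionA
    {Ω : Type*} [MeasurableSpace Ω] (μ : Measure Ω) [IsProbabilityMeasure μ]
    {n : ℕ} [NeZero n] (X : Fin n → Ω → ℝ) (hXm : ∀ i, Measurable (X i))
    (hA : AssumptionA μ X)
    (a b d : ℝ) (ha : 0 < a) (hab : a ≤ b) (hd : 0 ≤ d) :
    UnifMaxSum μ X
      {c : Fin n → ℝ | c 0 ∈ Set.Icc a b ∧ ∀ i : Fin n, i ≠ 0 → c i ∈ Set.Icc 0 d} :=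
  weighted_order_stats_tail_assumptionA_general μ X hXm hA a b d ha hd
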